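/- Let x_1,...,x_n be independent symmetric (around 0) random variables with |x_i| ≤ a_i almost surely, and let m ≥ max_i a_i. Then for any 0 ≤ s ≤ t, Pr[∑ x_i ∈ (t-m, t+m]] ≤ 5·Pr[∑ x_i ∈ (s-m, s+m]]. -/

import Mathlib

/-!
Let `W ν c = ν (c - m, c + m] + ν [c - m, c + m)`. By induction on the number of summands, the law
`ν` of a partial sum is symmetric and satisfies `W ν t ≤ 2 W ν s` for `0 ≤ s ≤ t`. Adding an
independent summand `u ≤ m` averages `W ν (t - u) ≤ 2 W ν (s - u)` over `u`. By symmetry `W ν`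
depends only on `|c|`, so either `|s - u| ≤ |t - u|` and the induction hypothesis applies, or
`s < u` and the window at `t - u` is covered by the windows at `±(u - s)`, which overlap because
`u - s ≤ m`. Finally `(t - m, t + m]` lies in the double window at `t`, and the double windows at
`r ↓ s` lie in `(s - m, r + m]`, which gives the constant `4`.
-/

open MeasureTheory ProbabilityTheory Set Filter Topology
open scoped ENNReal

namespace MeasureTheory.Measure

variable {G : Type*} [MeasurableSpace G]

instance isNegInvariant_dirac_zero [NegZeroClass G] [MeasurableNeg G] :
    (dirac (0 : G)).IsNegInvariant :=
  ⟨by rw [neg_def, map_dirac' measurable_neg, neg_zero]⟩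

instance isNegInvariant_conv [AddCommGroup G] [MeasurableNeg G] [MeasurableAdd₂ G]
    (ρ ν : Measure G) [SFinite ρ] [SFinite ν] [ρ.IsNegInvariant] [ν.IsNegInvariant] :
    (ρ ∗ ν).IsNegInvariant :=
  ⟨by rw [neg_def, ← coe_negAddMonoidHom, map_conv_addMonoidHom _ measurable_neg,
    coe_negAddMonoidHom, ← neg_def, ← neg_def, neg_eq_self, neg_eq_self]⟩

lemma isNegInvariant_map [Neg G] [MeasurableNeg G] {Ω : Type*} [MeasurableSpace Ω]
    {μ : Measure Ω} {X : Ω → G} (hX : Measurable X) (h : μ.map X = μ.map (fun ω => -X ω)) :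
    (μ.map X).IsNegInvariant :=
  ⟨by rw [neg_def, map_map measurable_neg hX]; exact h.symm⟩

lemma dirac_apply_le_dirac_apply {a : G} {I J : Set G} (hI : MeasurableSet I)
    (hIJ : a ∈ I → a ∈ J) :
    dirac a I ≤ dirac a J := by
  by_cases h : a ∈ I
  · rw [dirac_apply_of_mem h, dirac_apply_of_mem (hIJ h)]
  · rw [dirac_apply' _ hI, indicator_of_notMem h]
    exact zero_le

variable [AddMonoid G] [MeasurableAdd₂ G]

lemma conv_apply (ρ ν : Measure G) [SFinite ν] {S : Set G} (hS : MeasurableSet S) :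
    (ρ ∗ ν) S = ∫⁻ u, ν ((u + ·) ⁻¹' S) ∂ρ := by
  rw [conv, map_apply measurable_add hS, prod_apply (measurable_add hS)]
  rfl

lemma measurable_measure_preimage_const_add (ν : Measure G) [SFinite ν] {S : Set G}
    (hS : MeasurableSet S) : Measurable fun u => ν ((u + ·) ⁻¹' S) :=
  measurable_measure_prodMk_left (measurable_add hS)

end MeasureTheory.Measure

open Measure

-- Neither half-open window alone is reflection-invariant for a symmetric measure; their sum is.
noncomputable def windowMass (ν : Measure ℝ) (m c : ℝ) : ℝ≥0∞ :=
  ν (Ioc (c - m) (c + m)) + ν (Ico (c - m) (c + m))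

def HasWindowDecay (ν : Measure ℝ) (m : ℝ) : Prop :=
  ∀ ⦃s t : ℝ⦄, 0 ≤ s → s ≤ t → windowMass ν m t ≤ 2 * windowMass ν m s

section windowMass

variable {ν : Measure ℝ} {m : ℝ}

lemma windowMass_le_add_neg {A B : ℝ} (hAB : |A| ≤ B) (hBm : B ≤ m) :
    windowMass ν m A ≤ windowMass ν m B + windowMass ν m (-B) := by
  obtain ⟨hA₁, hA₂⟩ := abs_le.1 hAB
  have hIoc : Ioc (A - m) (A + m) ⊆ Ioc (B - m) (B + m) ∪ Ioc (-B - m) (-B + m) := by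
    intro z ⟨hz₁, hz₂⟩
    rcases lt_or_ge (B - m) z with h | h
    · exact .inl ⟨h, by linarith⟩
    · exact .inr ⟨by linarith, by linarith⟩
  have hIco : Ico (A - m) (A + m) ⊆ Ico (B - m) (B + m) ∪ Ico (-B - m) (-B + m) := by
    intro z ⟨hz₁, hz₂⟩
    rcases le_or_gt (B - m) z with h | h
    · exact .inl ⟨h, by linarith⟩
    · exact .inr ⟨by linarith, by linarith⟩
  calc windowMass ν m A
      ≤ (ν (Ioc (B - m) (B + m)) + ν (Ioc (-B - m) (-B + m)))
        + (ν (Ico (B - m) (B + m)) + ν (Ico (-B - m) (-B + m))) :=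
        add_le_add ((measure_mono hIoc).trans (measure_union_le _ _))
          ((measure_mono hIco).trans (measure_union_le _ _))
    _ = windowMass ν m B + windowMass ν m (-B) := add_add_add_comm _ _ _ _

variable [ν.IsNegInvariant]

lemma windowMass_neg (c : ℝ) : windowMass ν m (-c) = windowMass ν m c := by
  have hIoc : Ioc (-c - m) (-c + m) = -Ico (c - m) (c + m) := by
    rw [neg_Ico, neg_add', neg_sub', sub_neg_eq_add]
  have hIco : Ico (-c - m) (-c + m) = -Ioc (c - m) (c + m) := by
    rw [neg_Ioc, neg_add', neg_sub', sub_neg_eq_add]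
  rw [windowMass, windowMass, hIoc, hIco, measure_neg, measure_neg, add_comm]

lemma windowMass_abs (c : ℝ) : windowMass ν m |c| = windowMass ν m c := by
  rcases abs_choice c with h | h <;> rw [h]
  exact windowMass_neg c

lemma HasWindowDecay.windowMass_sub_le (hν : HasWindowDecay ν m) {s t u : ℝ} (hs : 0 ≤ s)
    (hst : s ≤ t) (hu : u ≤ m) : windowMass ν m (t - u) ≤ 2 * windowMass ν m (s - u) := by
  rw [← windowMass_abs (t - u), ← windowMass_abs (s - u)]
  by_cases hfar : |s - u| ≤ |t - u|
  · exact hν (abs_nonneg _) hfar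
  push Not at hfar
  have hsu : s < u := by
    by_contra! h
    rw [abs_of_nonneg (sub_nonneg.2 h)] at hfar
    linarith [le_abs_self (t - u)]
  rw [abs_sub_comm s, abs_of_pos (sub_pos.2 hsu)] at hfar ⊢
  calc windowMass ν m |t - u|
      ≤ windowMass ν m (u - s) + windowMass ν m (-(u - s)) :=
        windowMass_le_add_neg (by rw [abs_abs]; exact hfar.le) (by linarith)
    _ = 2 * windowMass ν m (u - s) := by rw [windowMass_neg, two_mul]

end windowMass

lemma windowMass_conv (ρ ν : Measure ℝ) [SFinite ν] (m c : ℝ) :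
    windowMass (ρ ∗ ν) m c = ∫⁻ u, windowMass ν m (c - u) ∂ρ := by
  rw [windowMass, conv_apply _ _ measurableSet_Ioc, conv_apply _ _ measurableSet_Ico,
    ← lintegral_add_left (measurable_measure_preimage_const_add ν measurableSet_Ioc)]
  simp only [windowMass, preimage_const_add_Ioc, preimage_const_add_Ico, sub_right_comm,
    add_sub_right_comm]

lemma hasWindowDecay_dirac_zero (m : ℝ) : HasWindowDecay (dirac 0) m := by
  intro s t hs hst
  calc windowMass (dirac 0) m t ≤ windowMass (dirac 0) m s :=
        add_le_add
          (dirac_apply_le_dirac_apply measurableSet_Ioc fun ⟨_, _⟩ => ⟨by linarith, by linarith⟩)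
          (dirac_apply_le_dirac_apply measurableSet_Ico fun ⟨_, _⟩ => ⟨by linarith, by linarith⟩)
    _ ≤ 2 * windowMass (dirac 0) m s := by rw [two_mul]; exact le_add_self

lemma HasWindowDecay.conv {ρ ν : Measure ℝ} [SFinite ν] [ν.IsNegInvariant] {m : ℝ}
    (hν : HasWindowDecay ν m) (hρ : ∀ᵐ u ∂ρ, u ≤ m) : HasWindowDecay (ρ ∗ ν) m := by
  intro s t hs hst
  rw [windowMass_conv, windowMass_conv, ← lintegral_const_mul' _ _ (by norm_num)]
  exact lintegral_mono_ae (hρ.mono fun u hu => hν.windowMass_sub_le hs hst hu)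

lemma HasWindowDecay.measure_Ioc_le {ν : Measure ℝ} [IsLocallyFiniteMeasure ν] {m s t : ℝ}
    (hν : HasWindowDecay ν m) (hs : 0 ≤ s) (hst : s ≤ t) :
    ν (Ioc (t - m) (t + m)) ≤ 4 * ν (Ioc (s - m) (s + m)) := by
  rcases hst.eq_or_lt with rfl | hst
  · exact le_mul_of_one_le_left' (by norm_num)
  have hbound : ∀ r ∈ Ioc s t, ν (Ioc (t - m) (t + m)) ≤ 4 * ν (Ioc (s - m) (r + m)) := by
    intro r ⟨hsr, hrt⟩
    calc ν (Ioc (t - m) (t + m)) ≤ windowMass ν m t := le_self_add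
      _ ≤ 2 * windowMass ν m r := hν (hs.trans hsr.le) hrt
      _ ≤ 2 * (2 * ν (Ioc (s - m) (r + m))) := by
        gcongr
        rw [two_mul]
        exact add_le_add (measure_mono (Ioc_subset_Ioc_left (by linarith)))
          (measure_mono fun _ ⟨h₁, h₂⟩ => ⟨by linarith, h₂.le⟩)
      _ = 4 * ν (Ioc (s - m) (r + m)) := by rw [← mul_assoc]; norm_num
  have hinter : ⋂ r > s, Ioc (s - m) (r + m) = Ioc (s - m) (s + m) := by
    ext z
    simp only [mem_iInter₂, mem_Ioc]
    refine ⟨fun h => ⟨(h (s + 1) (by linarith)).1, ?_⟩, fun h r hr => ⟨h.1, by linarith⟩⟩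
    have : z - m ≤ s :=
      le_of_forall_gt_imp_ge_of_dense fun r hr => by linarith [(h r hr).2]
    linarith
  have hlim : Tendsto (fun r => ν (Ioc (s - m) (r + m))) (𝓝[>] s)
      (𝓝 (ν (Ioc (s - m) (s + m)))) := by
    rw [← hinter]
    exact tendsto_measure_biInter_gt (fun r _ => measurableSet_Ioc.nullMeasurableSet)
      (fun i j _ hij => Ioc_subset_Ioc_right (by linarith))
      ⟨t, hst, measure_Ioc_lt_top.ne⟩
  exact ge_of_tendsto (ENNReal.Tendsto.const_mul hlim (.inr (by norm_num)))
    (by filter_upwards [Ioo_mem_nhdsGT hst] with r hr using hbound r ⟨hr.1, hr.2.le⟩)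

section PartialSums

variable {Ω ι : Type*} [MeasurableSpace Ω] {μ : Measure Ω} [IsProbabilityMeasure μ]
  {x : ι → Ω → ℝ}

lemma map_sum_insert [DecidableEq ι] (hmeas : ∀ i, Measurable (x i)) (hindep : iIndepFun x μ)
    {i : ι} {T : Finset ι} (hi : i ∉ T) :
    μ.map (∑ j ∈ insert i T, x j) = μ.map (x i) ∗ μ.map (∑ j ∈ T, x j) := by
  rw [Finset.sum_insert hi]
  exact (hindep.indepFun_finsetSum_of_notMem hmeas hi).symm.map_add_eq_map_conv_map (hmeas i)
    (by fun_prop)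

lemma map_sum_empty : μ.map (∑ j ∈ (∅ : Finset ι), x j) = dirac 0 := by
  rw [Finset.sum_empty, Pi.zero_def, Measure.map_const, measure_univ, one_smul]

lemma isNegInvariant_map_sum (hmeas : ∀ i, Measurable (x i)) (hindep : iIndepFun x μ)
    (hsymm : ∀ i, (μ.map (x i)).IsNegInvariant) (T : Finset ι) :
    (μ.map (∑ j ∈ T, x j)).IsNegInvariant := by
  classical
  induction T using Finset.induction_on with
  | empty => rw [map_sum_empty]; infer_instance
  | insert i T hi ih => rw [map_sum_insert hmeas hindep hi]; infer_instance

lemma hasWindowDecay_map_sum (hmeas : ∀ i, Measurable (x i)) (hindep : iIndepFun x μ)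
    (hsymm : ∀ i, (μ.map (x i)).IsNegInvariant) {m : ℝ}
    (hbdd : ∀ i, ∀ᵐ ω ∂μ, x i ω ≤ m) (T : Finset ι) : HasWindowDecay (μ.map (∑ j ∈ T, x j)) m := by
  classical
  induction T using Finset.induction_on with
  | empty => rw [map_sum_empty]; exact hasWindowDecay_dirac_zero m
  | insert i T hi ih =>
    have := isNegInvariant_map_sum hmeas hindep hsymm T
    rw [map_sum_insert hmeas hindep hi]
    exact ih.conv ((ae_map_iff (hmeas i).aemeasurable measurableSet_Iic).2 (hbdd i))

end PartialSums

theorem decay_of_intervals {Ω : Type*} [MeasurableSpace Ω]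
    (μ : Measure Ω) [IsProbabilityMeasure μ]
    (n : ℕ) (x : Fin n → Ω → ℝ) (a : Fin n → ℝ) (m : ℝ)
    (hmeas : ∀ i, Measurable (x i))
    (hindep : iIndepFun x μ)
    (hsymm : ∀ i, μ.map (x i) = μ.map (fun ω => -(x i ω)))
    (hbdd : ∀ i, ∀ᵐ ω ∂μ, |x i ω| ≤ a i)
    (hm : ∀ i, a i ≤ m)
    (s t : ℝ) (hs : 0 ≤ s) (hst : s ≤ t) :
    (μ {ω | (∑ i, x i ω) ∈ Set.Ioc (t - m) (t + m)}).toReal ≤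
      5 * (μ {ω | (∑ i, x i ω) ∈ Set.Ioc (s - m) (s + m)}).toReal := by
  have hdecay := hasWindowDecay_map_sum hmeas hindep
    (fun i => isNegInvariant_map (hmeas i) (hsymm i))
    (fun i => (hbdd i).mono fun ω h => (le_abs_self _).trans (h.trans (hm i))) Finset.univ
  have hsum : Measurable (∑ i, x i) := by fun_prop
  have hpre (I : Set ℝ) : {ω | ∑ i, x i ω ∈ I} = (∑ i, x i) ⁻¹' I := by
    ext ω; simp only [mem_ofPred_eq, mem_preimage, Finset.sum_apply]
  rw [hpre, hpre, ← map_apply hsum measurableSet_Ioc, ← map_apply hsum measurableSet_Ioc]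
  calc _ ≤ (4 * μ.map (∑ i, x i) (Ioc (s - m) (s + m))).toReal :=
        ENNReal.toReal_mono (by finiteness) (hdecay.measure_Ioc_le hs hst)
    _ ≤ 5 * _ := by rw [ENNReal.toReal_mul]; gcongr; norm_num
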